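/- For every natural number n, a_n = (n-1)! + ∑_{1 ≤ ℓ ≤ n/2} (-1)^{ℓ-1}·|G_{2ℓ}·s(n,2ℓ)|, where for n = 0 the term (n-1)! is interpreted as absent (a_0 = 0). -/

import Mathlib

/-- The rational sequence `a₀ = 0`, `aₙ = (n/2)·aₙ₋₁ + (n-1)!`. -/
noncomputable def a : ℕ → ℚ
  | 0 => 0
  | n + 1 => ((n + 1 : ℕ) : ℚ) / 2 * a n + (Nat.factorial n : ℚ)

/-- Genocchi numbers, defined by the EGF `2x/(eˣ+1) = ∑ Gₙ xⁿ/n!`. -/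
noncomputable def genocchi (n : ℕ) : ℚ :=
  (Nat.factorial n : ℚ) *
    PowerSeries.coeff (R := ℚ) n (2 * PowerSeries.X * (PowerSeries.exp ℚ + 1)⁻¹)

open Finset Polynomial in
/-- Signed Stirling numbers of the first kind: `s n k` is the coefficient of `X^k`
in `X(X-1)⋯(X-n+1)`. -/
noncomputable def stirlingFst (n k : ℕ) : ℤ :=
  (∏ i ∈ Finset.range n, (Polynomial.X - Polynomial.C (i : ℤ))).coeff k

/-!
Let `L` be the linear functional on `ℚ[X]` sending `X^k` to `G_k`. The generating function
identity `G(x)(eˣ + 1) = 2x` says `L(p(X + 1)) + L(p) = 2 p'(0)`. Applied to the falling factorial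
`p = X(X-1)⋯(X-n)`, for which `p(X + 1) = (X + 1)·X(X-1)⋯(X-n+1)`, this gives a two-term
recurrence for `L(X(X-1)⋯(X-n+1)) = ∑ₖ s(n,k) G_k`, which after the sign `(-1)^(n+1)` is the
recurrence defining `aₙ`. Since `G_k` vanishes at `k = 0` and at odd `k > 1`, only `k = 1` and the
even `k` survive, and the known signs of `G_{2ℓ}` and `s(n,2ℓ)` turn each term into an absolute value.
-/

theorem neg_one_pow_succ_mul_bernoulli_two_mul_pos {k : ℕ} (hk : k ≠ 0) :
    0 < (-1 : ℚ) ^ (k + 1) * bernoulli (2 * k) := by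
  have hζ := hasSum_lt (f := fun _ : ℕ => (0 : ℝ)) (i := 1) (fun n => by positivity)
    (by simp) hasSum_zero (hasSum_zeta_nat hk)
  have hc : (0 : ℝ) < 2 ^ (2 * k - 1) * Real.pi ^ (2 * k) / (2 * k).factorial := by positivity
  rw [show (-1 : ℝ) ^ (k + 1) * 2 ^ (2 * k - 1) * Real.pi ^ (2 * k) * bernoulli (2 * k) /
      (2 * k).factorial = ((-1) ^ (k + 1) * bernoulli (2 * k)) *
      (2 ^ (2 * k - 1) * Real.pi ^ (2 * k) / (2 * k).factorial) by ring] at hζ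
  exact_mod_cast pos_of_mul_pos_left hζ hc.le

section GenocchiSeries

open PowerSeries

noncomputable def genocchiSeries : ℚ⟦X⟧ := 2 * X * (exp ℚ + 1)⁻¹

lemma genocchiSeries_mul_exp_add_one : genocchiSeries * (exp ℚ + 1) = 2 * X := by
  rw [genocchiSeries, mul_assoc, PowerSeries.inv_mul_cancel _ (by simp), mul_one]

lemma genocchiSeries_eq_mk : genocchiSeries = mk fun n => genocchi n / n.factorial := by
  ext n
  simp [genocchi, genocchiSeries, Nat.factorial_ne_zero]

lemma exp_sq_sub_one_ne_zero : (exp ℚ ^ 2 - 1 : ℚ⟦X⟧) ≠ 0 := by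
  intro h
  simpa [exp_pow_eq_rescale_exp, coeff_rescale] using congrArg (coeff 1) h

lemma genocchiSeries_eq_bernoulliPowerSeries :
    genocchiSeries = 2 * (bernoulliPowerSeries ℚ - rescale 2 (bernoulliPowerSeries ℚ)) := by
  have hB := bernoulliPowerSeries_mul_exp_sub_one ℚ
  have hB2 : rescale (2 : ℚ) (bernoulliPowerSeries ℚ) * (exp ℚ ^ 2 - 1) = 2 * X := by
    simpa [exp_pow_eq_rescale_exp, rescale_X, map_ofNat] using congrArg (rescale (2 : ℚ)) hB
  refine mul_right_cancel₀ exp_sq_sub_one_ne_zero ?_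
  linear_combination (exp ℚ - 1) * genocchiSeries_mul_exp_add_one - 2 * (exp ℚ + 1) * hB + 2 * hB2

theorem genocchi_eq_bernoulli (n : ℕ) : genocchi n = 2 * (1 - 2 ^ n) * bernoulli n := by
  have h := congrArg (coeff n) genocchiSeries_eq_bernoulliPowerSeries
  rw [← map_ofNat (C (R := ℚ)) 2, coeff_C_mul] at h
  simp only [genocchiSeries_eq_mk, coeff_mk, bernoulliPowerSeries, Algebra.algebraMap_self,
    map_div₀, eq_ratCast, Rat.cast_eq_id, id_eq, map_natCast, map_sub, coeff_rescale] at h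
  have : (n.factorial : ℚ) ≠ 0 := by positivity
  field_simp at h
  linear_combination h

lemma genocchi_zero : genocchi 0 = 0 := by simp [genocchi_eq_bernoulli]

lemma genocchi_one : genocchi 1 = 1 := by norm_num [genocchi_eq_bernoulli]

lemma genocchi_eq_zero_of_odd {n : ℕ} (hodd : Odd n) (hn : 1 < n) : genocchi n = 0 := by
  simp [genocchi_eq_bernoulli, bernoulli_eq_zero_of_odd hodd hn]

lemma abs_genocchi_two_mul {k : ℕ} (hk : k ≠ 0) :
    |genocchi (2 * k)| = (-1) ^ k * genocchi (2 * k) := by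
  have hB := neg_one_pow_succ_mul_bernoulli_two_mul_pos hk
  have h4 : (1 : ℚ) ≤ 2 ^ (2 * k) := one_le_pow₀ (by norm_num)
  have hnonneg : 0 ≤ (-1 : ℚ) ^ k * genocchi (2 * k) := by
    rw [genocchi_eq_bernoulli,
      show (-1 : ℚ) ^ k * (2 * (1 - 2 ^ (2 * k)) * bernoulli (2 * k)) =
        2 * (2 ^ (2 * k) - 1) * ((-1) ^ (k + 1) * bernoulli (2 * k)) by ring]
    exact mul_nonneg (by linarith) hB.le
  rw [← abs_of_nonneg hnonneg, abs_mul, abs_neg_one_pow, one_mul]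

lemma factorial_mul_coeff_mk_mul_exp (c : ℕ → ℚ) (n : ℕ) :
    n.factorial * coeff n ((mk fun k => c k / k.factorial) * exp ℚ) =
      ∑ j ∈ Finset.range (n + 1), n.choose j * c j := by
  rw [coeff_mul, Finset.Nat.sum_antidiagonal_eq_sum_range_succ_mk, Finset.mul_sum]
  refine Finset.sum_congr rfl fun j hj => ?_
  have hjn : j ≤ n := Nat.lt_succ_iff.mp (Finset.mem_range.mp hj)
  rw [coeff_mk, coeff_exp, Algebra.algebraMap_self, RingHom.id_apply, Nat.cast_choose ℚ hjn]
  field_simp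

lemma sum_choose_mul_genocchi_add_genocchi (n : ℕ) :
    ∑ j ∈ Finset.range (n + 1), n.choose j * genocchi j + genocchi n =
      if n = 1 then 2 else 0 := by
  have h := congrArg (fun f => (n.factorial : ℚ) * coeff n f) genocchiSeries_mul_exp_add_one
  simp only [mul_add, mul_one, map_add] at h
  rw [genocchiSeries_eq_mk, factorial_mul_coeff_mk_mul_exp, coeff_mk,
    ← map_ofNat (C (R := ℚ)) 2, coeff_C_mul, coeff_X] at h
  rcases eq_or_ne n 1 with rfl | hn
  · simpa using h
  · have : (n.factorial : ℚ) ≠ 0 := by positivity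
    field_simp at h
    simpa [hn] using h

end GenocchiSeries

section GenocchiFunctional

open Polynomial

noncomputable def genocchiFunctional : ℚ[X] →ₗ[ℚ] ℚ :=
  lsum fun k => LinearMap.toSpanSingleton ℚ ℚ (genocchi k)

lemma genocchiFunctional_eq_sum_range {p : ℚ[X]} {N : ℕ} (hN : p.natDegree < N) :
    genocchiFunctional p = ∑ k ∈ Finset.range N, p.coeff k * genocchi k := by
  rw [genocchiFunctional, lsum_apply]
  exact sum_over_range' p (fun _ => LinearMap.map_zero _) N hN

lemma genocchiFunctional_monomial (n : ℕ) (c : ℚ) :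
    genocchiFunctional (monomial n c) = c * genocchi n := by
  rw [genocchiFunctional, lsum_apply, sum_monomial_index _ _ (LinearMap.map_zero _)]
  rfl

lemma genocchiFunctional_X_add_one_pow (n : ℕ) :
    genocchiFunctional ((X + 1) ^ n) = ∑ j ∈ Finset.range (n + 1), n.choose j * genocchi j := by
  have hdeg : ((X + 1 : ℚ[X]) ^ n).natDegree < n + 1 := by
    rw [← C_1, natDegree_pow_X_add_C]; exact n.lt_succ_self
  simp only [genocchiFunctional_eq_sum_range hdeg, coeff_X_add_one_pow]

theorem genocchiFunctional_comp_X_add_one_add (p : ℚ[X]) :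
    genocchiFunctional (p.comp (X + 1)) + genocchiFunctional p = 2 * p.coeff 1 := by
  induction p using Polynomial.induction_on' with
  | add p q hp hq => rw [add_comp, map_add, map_add, coeff_add]; linarith
  | monomial n c =>
    rw [monomial_comp, ← smul_eq_C_mul, map_smul, smul_eq_mul, genocchiFunctional_X_add_one_pow,
      genocchiFunctional_monomial, coeff_monomial]
    have h := sum_choose_mul_genocchi_add_genocchi n
    split_ifs at h ⊢ <;> subst_vars <;> linear_combination c * h

end GenocchiFunctional

section Stirling

open Polynomial

lemma descPochhammer_succ_comp_X_add_one {R : Type*} [CommRing R] (n : ℕ) :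
    (descPochhammer R (n + 1)).comp (X + 1) = (X + 1) * descPochhammer R n := by
  rw [descPochhammer_succ_left, mul_comp, X_comp, comp_assoc, sub_comp, X_comp, one_comp,
    add_sub_cancel_right, comp_X]

lemma descPochhammer_eq_prod_range {R : Type*} [CommRing R] (n : ℕ) :
    descPochhammer R n = ∏ i ∈ Finset.range n, (X - C (i : R)) := by
  induction n with
  | zero => simp
  | succ n ih => rw [descPochhammer_succ_right, ih, Finset.prod_range_succ, C_eq_natCast]

theorem coeff_descPochhammer_int (n k : ℕ) :
    (descPochhammer ℤ n).coeff k = (-1) ^ (n + k) * Nat.stirlingFirst n k := by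
  induction n generalizing k with
  | zero => cases k <;> simp [coeff_one]
  | succ n ih =>
    cases k with
    | zero => simp [coeff_zero_eq_eval_zero]
    | succ k =>
      rw [descPochhammer_succ_right, mul_sub, coeff_sub, coeff_mul_X, coeff_mul_natCast, ih, ih,
        Nat.stirlingFirst_succ_succ]
      push_cast
      ring

lemma stirlingFst_eq_neg_one_pow_mul_stirlingFirst (n k : ℕ) :
    stirlingFst n k = (-1) ^ (n + k) * Nat.stirlingFirst n k := by
  rw [stirlingFst, ← descPochhammer_eq_prod_range, coeff_descPochhammer_int]

lemma cast_stirlingFst (n k : ℕ) : (stirlingFst n k : ℚ) = (descPochhammer ℚ n).coeff k := by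
  rw [stirlingFst, ← descPochhammer_eq_prod_range, ← descPochhammer_map (Int.castRingHom ℚ),
    coeff_map, eq_intCast]

lemma coeff_one_descPochhammer_succ (n : ℕ) :
    (descPochhammer ℚ (n + 1)).coeff 1 = (-1) ^ n * n.factorial := by
  rw [← cast_stirlingFst, stirlingFst_eq_neg_one_pow_mul_stirlingFirst,
    Nat.stirlingFirst_one_right]
  push_cast
  ring

end Stirling

section Recurrence

open Polynomial

lemma genocchiFunctional_descPochhammer_succ (n : ℕ) :
    2 * genocchiFunctional (descPochhammer ℚ (n + 1)) +
        (n + 1) * genocchiFunctional (descPochhammer ℚ n) = 2 * ((-1) ^ n * n.factorial) := by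
  have h := genocchiFunctional_comp_X_add_one_add (descPochhammer ℚ (n + 1))
  have hsplit : (X + 1) * descPochhammer ℚ n =
      descPochhammer ℚ (n + 1) + C ((n : ℚ) + 1) * descPochhammer ℚ n := by
    rw [descPochhammer_succ_right, C_add, C_1, C_eq_natCast]
    ring
  rw [descPochhammer_succ_comp_X_add_one, hsplit, map_add, ← smul_eq_C_mul, map_smul,
    smul_eq_mul, coeff_one_descPochhammer_succ] at h
  linarith

lemma a_eq_neg_one_pow_mul_genocchiFunctional (n : ℕ) :
    a n = (-1) ^ (n + 1) * genocchiFunctional (descPochhammer ℚ n) := by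
  induction n with
  | zero => simp [a, genocchiFunctional_eq_sum_range (p := 1) (N := 1) (by simp), genocchi_zero]
  | succ n ih =>
    have h := genocchiFunctional_descPochhammer_succ n
    have hsq : (-1 : ℚ) ^ (2 * n) = 1 := (even_two_mul n).neg_one_pow
    rw [a, ih]
    push_cast
    linear_combination (-(-1 : ℚ) ^ n / 2) * h - n.factorial * hsq

lemma genocchiFunctional_descPochhammer (n : ℕ) :
    genocchiFunctional (descPochhammer ℚ n) =
      ∑ k ∈ Finset.range (n + 1), stirlingFst n k * genocchi k := by
  simp only [cast_stirlingFst]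
  exact genocchiFunctional_eq_sum_range ((descPochhammer_natDegree ℚ n).trans_lt n.lt_succ_self)

end Recurrence

lemma sum_range_succ_eq_add_sum_Icc_two_mul {M : Type*} [AddCommMonoid M] {g : ℕ → M}
    (h0 : g 0 = 0) (hodd : ∀ k, Odd k → 1 < k → g k = 0) {n : ℕ} (hn : 1 ≤ n) :
    ∑ k ∈ Finset.range (n + 1), g k = g 1 + ∑ ℓ ∈ Finset.Icc 1 (n / 2), g (2 * ℓ) := by
  induction n, hn using Nat.le_induction with
  | base => simp [Finset.sum_range_succ, h0]
  | succ n hn ih =>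
    rw [Finset.sum_range_succ, ih]
    rcases Nat.even_or_odd (n + 1) with ⟨m, hm⟩ | hodd'
    · rw [show (n + 1) / 2 = n / 2 + 1 by omega, Finset.sum_Icc_succ_top (by omega),
        show 2 * (n / 2 + 1) = n + 1 by omega, add_assoc]
    · rw [hodd _ hodd' (by omega), show (n + 1) / 2 = n / 2 by obtain ⟨m, hm⟩ := hodd'; omega,
        add_zero]

lemma neg_one_pow_mul_stirlingFst_mul_genocchi (n : ℕ) {ℓ : ℕ} (hℓ : ℓ ≠ 0) :
    (-1 : ℚ) ^ (n + 1) * (stirlingFst n (2 * ℓ) * genocchi (2 * ℓ)) =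
      (-1) ^ (ℓ - 1) * |genocchi (2 * ℓ) * (stirlingFst n (2 * ℓ) : ℚ)| := by
  rw [abs_mul, abs_genocchi_two_mul hℓ, stirlingFst_eq_neg_one_pow_mul_stirlingFirst]
  push_cast
  rw [abs_mul, abs_neg_one_pow, one_mul, Nat.abs_cast]
  obtain ⟨j, rfl⟩ : ∃ j, ℓ = j + 1 := ⟨ℓ - 1, by omega⟩
  rw [Nat.add_sub_cancel]
  ring_nf
  simp [pow_mul']

open Finset in
theorem stmt_14 (n : ℕ) :
    a n = (if n = 0 then 0 else (Nat.factorial (n - 1) : ℚ)) +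
      ∑ ℓ ∈ Finset.Icc 1 (n / 2),
        (-1 : ℚ) ^ (ℓ - 1) * |genocchi (2 * ℓ) * (stirlingFst n (2 * ℓ) : ℚ)| := by
  rcases n with _ | n
  · simp [a]
  rw [a_eq_neg_one_pow_mul_genocchiFunctional, genocchiFunctional_descPochhammer,
    sum_range_succ_eq_add_sum_Icc_two_mul (by simp [genocchi_zero])
      (fun k hk hk1 => by simp [genocchi_eq_zero_of_odd hk hk1]) (by omega),
    mul_add, mul_sum, if_neg n.succ_ne_zero, Nat.add_sub_cancel]
  congr 1
  · rw [stirlingFst_eq_neg_one_pow_mul_stirlingFirst, Nat.stirlingFirst_one_right, genocchi_one]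
    push_cast
    ring_nf
    simp [pow_mul']
  · exact sum_congr rfl fun ℓ hℓ =>
      neg_one_pow_mul_stirlingFst_mul_genocchi _ (Nat.one_le_iff_ne_zero.mp (mem_Icc.mp hℓ).1)
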